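/- For any n ∈ ℕ and θ ∈ ℕ with θ ≥ 2, every bi-Lipschitz embedding of K₄ into the weighted complete binary tree WB_{θ,n} has distortion at least 3/2. -/

import Mathlib

/-- Weighted depth of a node `l` of the binary tree `B_n` in `WB_{θ,n}`: the sum of the
weights `θ^(n-i)` of the edges on the way from the root to `l` (the edge at level `i`
has weight `θ^(n-i)`). -/
def wdepth (θ n : ℕ) (l : List Bool) : ℕ := ∑ i ∈ Finset.range l.length, θ ^ (n - (i + 1))

/-- Longest common prefix of two lists. -/
def commonPrefix : List Bool → List Bool → List Bool
  | a :: as, b :: bs => if a = b then a :: commonPrefix as bs else []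
  | _, _ => []

/-- Vertices of the weighted complete binary tree `WB_{θ,n}`: binary addresses of length
at most `n`. -/
def WBvertex (n : ℕ) : Type := { l : List Bool // l.length ≤ n }

/-- The weighted shortest path metric on `WB_{θ,n}`: the distance between two vertices is
the total weight of the path between them through their last common ancestor. -/
def WBdist (θ n : ℕ) (u v : WBvertex n) : ℕ :=
  wdepth θ n u.1 + wdepth θ n v.1 - 2 * wdepth θ n (commonPrefix u.1 v.1)

/-!
Choose two of the four points whose common prefix `c` (their meet in the tree) is as long as
possible, and a third point `w` that is not the parent of `c`; it exists because the two
remaining points are distinct. If `w` lies below `c`, the three points below `c` pairwise meet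
exactly at `c`, and since the tree is binary one of them is `c` itself; then `c` lies on the
geodesic between the other two, and one of them is at most half as far from `c` as from the
other. Otherwise the paths from the first two points to `w` pass through `c`. Since `θ ≥ 2`, the
subtree below `c` has height less than the weight `h = θ ^ (n - |c|)` of the edge above `c`,
while `w` is at distance at least `2 h` from `c`; this forces the distance between the first two
points to be at most `2/3` of the distance from one of them to `w`.
-/

open List Function

@[simp] theorem commonPrefix_nil_left (b : List Bool) : commonPrefix [] b = [] := by
  cases b <;> rfl

@[simp] theorem commonPrefix_nil_right (a : List Bool) : commonPrefix a [] = [] := by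
  cases a <;> rfl

@[simp] theorem commonPrefix_cons_cons (a b : Bool) (as bs : List Bool) :
    commonPrefix (a :: as) (b :: bs) = if a = b then a :: commonPrefix as bs else [] := rfl

theorem commonPrefix_comm : ∀ a b : List Bool, commonPrefix a b = commonPrefix b a
  | [], b => by simp
  | _ :: _, [] => by simp
  | a :: as, b :: bs => by
      by_cases h : a = b
      · subst h; simp [commonPrefix_comm as bs]
      · simp [h, Ne.symm h]

theorem commonPrefix_prefix_left : ∀ a b : List Bool, commonPrefix a b <+: a
  | [], _ => by simp
  | _ :: _, [] => by simp
  | a :: as, b :: bs => by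
      by_cases h : a = b
      · simpa [h] using commonPrefix_prefix_left as bs
      · simp [h]

theorem commonPrefix_prefix_right (a b : List Bool) : commonPrefix a b <+: b :=
  commonPrefix_comm a b ▸ commonPrefix_prefix_left b a

theorem prefix_commonPrefix_iff {c a b : List Bool} :
    c <+: commonPrefix a b ↔ c <+: a ∧ c <+: b := by
  refine ⟨fun h => ⟨h.trans (commonPrefix_prefix_left a b),
    h.trans (commonPrefix_prefix_right a b)⟩, ?_⟩
  rintro ⟨⟨s, rfl⟩, ⟨t, rfl⟩⟩
  induction c with
  | nil => exact nil_prefix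
  | cons x c ih => simpa using ih

theorem commonPrefix_eq_of_length_le {c a b : List Bool} (ha : c <+: a) (hb : c <+: b)
    (h : (commonPrefix a b).length ≤ c.length) : commonPrefix a b = c :=
  ((prefix_commonPrefix_iff.2 ⟨ha, hb⟩).eq_of_length_le h).symm

theorem commonPrefix_eq_right {c u : List Bool} (h : c <+: u) : commonPrefix u c = c :=
  commonPrefix_eq_of_length_le h prefix_rfl (commonPrefix_prefix_right u c).length_le

theorem commonPrefix_prefix_of_not_prefix {c u w : List Bool} (hcu : c <+: u) (hcw : ¬c <+: w) :
    commonPrefix u w <+: c :=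
  (prefix_or_prefix_of_prefix (commonPrefix_prefix_left u w) hcu).resolve_right
    fun h => hcw (h.trans (commonPrefix_prefix_right u w))

theorem exists_append_singleton_prefix {c u : List Bool} (h : c <+: u) (hne : c ≠ u) :
    ∃ a, c ++ [a] <+: u := by
  obtain ⟨_ | ⟨a, t⟩, rfl⟩ := h
  · simp at hne
  · exact ⟨a, t, by simp⟩

theorem eq_or_eq_or_eq_of_commonPrefix_eq {u v w c : List Bool} (huv : commonPrefix u v = c)
    (huw : commonPrefix u w = c) (hvw : commonPrefix v w = c) : u = c ∨ v = c ∨ w = c := by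
  by_contra! hne
  have hmeet : ∀ {p q : List Bool} (a : Bool), commonPrefix p q = c →
      c ++ [a] <+: p → c ++ [a] <+: q → False := fun a hpq hp hq => by
    simpa [hpq] using (prefix_commonPrefix_iff.2 ⟨hp, hq⟩).length_le
  obtain ⟨a, ha⟩ := exists_append_singleton_prefix
    (huv ▸ commonPrefix_prefix_left u v) (Ne.symm hne.1)
  obtain ⟨b, hb⟩ := exists_append_singleton_prefix
    (huv ▸ commonPrefix_prefix_right u v) (Ne.symm hne.2.1)
  obtain ⟨e, he⟩ := exists_append_singleton_prefix
    (huw ▸ commonPrefix_prefix_right u w) (Ne.symm hne.2.2)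
  have : a = b ∨ a = e ∨ b = e := by cases a <;> cases b <;> cases e <;> simp
  rcases this with rfl | rfl | rfl
  exacts [hmeet a huv ha hb, hmeet a huw ha he, hmeet b hvw hb he]

section Depth

variable {θ n : ℕ}

def levelDepth (θ n k : ℕ) : ℕ := ∑ i ∈ Finset.range k, θ ^ (n - (i + 1))

theorem levelDepth_succ (k : ℕ) :
    levelDepth θ n (k + 1) = levelDepth θ n k + θ ^ (n - (k + 1)) :=
  Finset.sum_range_succ _ _

theorem levelDepth_mono : Monotone (levelDepth θ n) := fun _ _ h =>
  Finset.sum_le_sum_of_subset (Finset.range_subset_range.2 h)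

theorem levelDepth_add_pow_le {k L : ℕ} (h : k < L) :
    levelDepth θ n k + θ ^ (n - (k + 1)) ≤ levelDepth θ n L :=
  levelDepth_succ (θ := θ) (n := n) k ▸ levelDepth_mono h

theorem levelDepth_add_pow_le_of_le (hθ : 2 ≤ θ) {m L : ℕ} (hmL : m ≤ L) (hL : L ≤ n) :
    levelDepth θ n L + θ ^ (n - L) ≤ levelDepth θ n m + θ ^ (n - m) := by
  induction L, hmL using Nat.le_induction with
  | base => rfl
  | succ L hmL ih =>
    have hpow : 2 * θ ^ (n - (L + 1)) ≤ θ ^ (n - L) := by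
      rw [show n - L = n - (L + 1) + 1 by omega, pow_succ, mul_comm]
      exact Nat.mul_le_mul_left _ hθ
    have := ih (by omega)
    rw [levelDepth_succ]
    omega

theorem wdepth_eq_levelDepth (l : List Bool) : wdepth θ n l = levelDepth θ n l.length := rfl

theorem wdepth_le_of_prefix {l₁ l₂ : List Bool} (h : l₁ <+: l₂) :
    wdepth θ n l₁ ≤ wdepth θ n l₂ :=
  levelDepth_mono h.length_le

end Depth

section Dist

variable {θ n : ℕ}

/-- `WBdist` on the underlying addresses, without the length bound. -/
def treeDist (θ n : ℕ) (u v : List Bool) : ℕ :=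
  wdepth θ n u + wdepth θ n v - 2 * wdepth θ n (commonPrefix u v)

theorem treeDist_comm (u v : List Bool) : treeDist θ n u v = treeDist θ n v u := by
  rw [treeDist, treeDist, commonPrefix_comm, add_comm]

theorem treeDist_of_prefix {c u : List Bool} (h : c <+: u) :
    treeDist θ n u c = wdepth θ n u - wdepth θ n c := by
  rw [treeDist, commonPrefix_eq_right h]
  omega

theorem treeDist_eq_add_of_prefix {c u v : List Bool} (hcu : c <+: u)
    (hc : commonPrefix u v <+: c) :
    treeDist θ n u v = treeDist θ n u c + treeDist θ n c v := by
  have hcv : commonPrefix c v = commonPrefix u v := by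
    have h₁ : commonPrefix c v <+: commonPrefix u v := prefix_commonPrefix_iff.2
      ⟨(commonPrefix_prefix_left c v).trans hcu, commonPrefix_prefix_right c v⟩
    have h₂ : commonPrefix u v <+: commonPrefix c v :=
      prefix_commonPrefix_iff.2 ⟨hc, commonPrefix_prefix_right u v⟩
    exact h₁.eq_of_length (le_antisymm h₁.length_le h₂.length_le)
  have := wdepth_le_of_prefix (θ := θ) (n := n) hcu
  have := wdepth_le_of_prefix (θ := θ) (n := n) hc
  have := wdepth_le_of_prefix (θ := θ) (n := n) (commonPrefix_prefix_right u v)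
  rw [treeDist_of_prefix hcu, treeDist, treeDist, hcv]
  omega

theorem two_mul_treeDist_le_or_of_commonPrefix_eq {u v w : List Bool}
    (h : commonPrefix u v = w) :
    2 * treeDist θ n u w ≤ treeDist θ n u v ∨ 2 * treeDist θ n v w ≤ treeDist θ n u v := by
  subst h
  have := treeDist_eq_add_of_prefix (θ := θ) (n := n) (commonPrefix_prefix_left u v) prefix_rfl
  rw [treeDist_comm (commonPrefix u v) v] at this
  omega

/-- Since `θ ≥ 2`, the subtree below `c` has height less than the weight of the edge above `c`. -/
theorem treeDist_lt_of_prefix (hθ : 2 ≤ θ) {c u : List Bool} (h : c <+: u) (hu : u.length ≤ n) :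
    treeDist θ n u c < θ ^ (n - c.length) := by
  have := levelDepth_add_pow_le_of_le hθ h.length_le hu
  have : 0 < θ ^ (n - u.length) := by positivity
  have : 0 < θ ^ (n - c.length) := by positivity
  rw [treeDist_of_prefix h, wdepth_eq_levelDepth, wdepth_eq_levelDepth]
  omega

/-- Outside the subtree below `c`, only the parent of `c` is closer to `c` than twice the weight
of the edge above `c`. -/
theorem two_mul_pow_le_treeDist (hθ : 1 ≤ θ) {c w : List Bool} (hcw : ¬c <+: w)
    (hw : w ≠ c.dropLast) : 2 * θ ^ (n - c.length) ≤ treeDist θ n c w := by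
  rw [treeDist, wdepth_eq_levelDepth, wdepth_eq_levelDepth, wdepth_eq_levelDepth]
  set g := commonPrefix c w
  have hgc : g <+: c := commonPrefix_prefix_left c w
  have hgw : g <+: w := commonPrefix_prefix_right c w
  have hgc_lt : g.length < c.length :=
    lt_of_le_of_ne hgc.length_le fun h => hcw (hgc.eq_of_length h ▸ hgw)
  have := levelDepth_mono (θ := θ) (n := n) hgw.length_le
  rcases Nat.lt_or_eq_of_le (show g.length + 1 ≤ c.length by omega) with hlt | heq
  · have hc := levelDepth_succ (θ := θ) (n := n) (c.length - 1)
    rw [Nat.sub_add_cancel (by omega)] at hc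
    have hg_up := levelDepth_add_pow_le (θ := θ) (n := n) (show g.length < c.length - 1 by omega)
    have hpow : θ ^ (n - c.length) ≤ θ ^ (n - (g.length + 1)) := pow_le_pow_right₀ hθ (by omega)
    omega
  · have hg : g = c.dropLast :=
      (prefix_of_prefix_length_le hgc (dropLast_prefix c) (by simp; omega)).eq_of_length
        (by simp; omega)
    have hgw_lt : g.length < w.length :=
      lt_of_le_of_ne hgw.length_le fun h => hw ((hgw.eq_of_length h).symm.trans hg)
    have hw_deep := levelDepth_add_pow_le (θ := θ) (n := n) hgw_lt
    have hc := levelDepth_succ (θ := θ) (n := n) g.length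
    rw [heq] at hw_deep hc
    omega

theorem three_mul_treeDist_le_or_of_not_prefix (hθ : 2 ≤ θ) {u v w : List Bool}
    (hu : u.length ≤ n) (hv : v.length ≤ n) (hw : ¬commonPrefix u v <+: w)
    (hw' : w ≠ (commonPrefix u v).dropLast) :
    3 * treeDist θ n u v ≤ 2 * treeDist θ n u w ∨ 3 * treeDist θ n u v ≤ 2 * treeDist θ n v w := by
  set c := commonPrefix u v
  have hcu : c <+: u := commonPrefix_prefix_left u v
  have hcv : c <+: v := commonPrefix_prefix_right u v
  have huv : treeDist θ n u v = treeDist θ n u c + treeDist θ n c v :=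
    treeDist_eq_add_of_prefix hcu prefix_rfl
  have huw : treeDist θ n u w = treeDist θ n u c + treeDist θ n c w :=
    treeDist_eq_add_of_prefix hcu (commonPrefix_prefix_of_not_prefix hcu hw)
  have hvw : treeDist θ n v w = treeDist θ n v c + treeDist θ n c w :=
    treeDist_eq_add_of_prefix hcv (commonPrefix_prefix_of_not_prefix hcv hw)
  have hu_near := treeDist_lt_of_prefix hθ hcu hu
  have hv_near := treeDist_lt_of_prefix hθ hcv hv
  have hw_far := two_mul_pow_le_treeDist (θ := θ) (n := n) (by omega) hw hw'
  rw [treeDist_comm c v] at huv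
  omega

end Dist

theorem exists_ne_ne_apply_ne {ι α : Type*} [Fintype ι] (hι : 4 ≤ Fintype.card ι) {x : ι → α}
    (hx : Injective x) (i j : ι) (y : α) : ∃ r, r ≠ i ∧ r ≠ j ∧ x r ≠ y := by
  classical
  have hy : (Finset.univ.filter (x · = y)).card ≤ 1 := Finset.card_le_one.2 fun a ha b hb =>
    hx ((Finset.mem_filter.1 ha).2.trans (Finset.mem_filter.1 hb).2.symm)
  have hcard : ({i, j} ∪ Finset.univ.filter (x · = y)).card < (Finset.univ : Finset ι).card := by
    calc _ ≤ ({i, j} : Finset ι).card + (Finset.univ.filter (x · = y)).card :=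
          Finset.card_union_le _ _
      _ ≤ 2 + 1 := add_le_add (Finset.card_le_two (a := i) (b := j)) hy
      _ < Finset.univ.card := by rw [Finset.card_univ]; omega
  obtain ⟨r, -, hr⟩ := Finset.exists_mem_notMem_of_card_lt_card hcard
  simp only [Finset.mem_union, Finset.mem_insert, Finset.mem_singleton, Finset.mem_filter,
    Finset.mem_univ, true_and, not_or] at hr
  exact ⟨r, hr.1.1, hr.1.2, hr.2⟩

section FourPoints

variable {θ n : ℕ} {ι : Type*} {x : ι → List Bool}

theorem exists_three_mul_treeDist_le_of_commonPrefix_eq {i j k : ι} (hij : i ≠ j) (hik : i ≠ k)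
    (hjk : j ≠ k) (h : commonPrefix (x j) (x k) = x i) :
    ∃ a b a' b' : ι, a ≠ b ∧ a' ≠ b' ∧
      3 * treeDist θ n (x a) (x b) ≤ 2 * treeDist θ n (x a') (x b') := by
  rcases two_mul_treeDist_le_or_of_commonPrefix_eq (θ := θ) (n := n) h with h' | h'
  · exact ⟨j, i, j, k, hij.symm, hjk, by omega⟩
  · exact ⟨k, i, j, k, hik.symm, hjk, by omega⟩

theorem exists_three_mul_treeDist_le [Fintype ι] (hι : 4 ≤ Fintype.card ι) (hθ : 2 ≤ θ)
    (hx : Injective x) (hn : ∀ i, (x i).length ≤ n) :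
    ∃ i j k l : ι, i ≠ j ∧ k ≠ l ∧
      3 * treeDist θ n (x i) (x j) ≤ 2 * treeDist θ n (x k) (x l) := by
  classical
  have hpair : (Finset.univ.offDiag : Finset (ι × ι)).Nonempty := by
    obtain ⟨i, j, hij⟩ := Fintype.exists_pair_of_one_lt_card (α := ι) (by omega)
    exact ⟨(i, j), by simpa using hij⟩
  obtain ⟨⟨i, j⟩, hij, hmax⟩ := Finset.exists_max_image _
    (fun p : ι × ι => (commonPrefix (x p.1) (x p.2)).length) hpair
  simp only [Finset.mem_offDiag, Finset.mem_univ, true_and] at hij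
  obtain ⟨r, hri, hrj, hrc⟩ := exists_ne_ne_apply_ne hι hx i j (commonPrefix (x i) (x j)).dropLast
  by_cases hcr : commonPrefix (x i) (x j) <+: x r
  · have hir : commonPrefix (x i) (x r) = commonPrefix (x i) (x j) :=
      commonPrefix_eq_of_length_le (commonPrefix_prefix_left _ _) hcr
        (hmax (i, r) (by simpa using hri.symm))
    have hjr : commonPrefix (x j) (x r) = commonPrefix (x i) (x j) :=
      commonPrefix_eq_of_length_le (commonPrefix_prefix_right _ _) hcr
        (hmax (j, r) (by simpa using hrj.symm))
    rcases eq_or_eq_or_eq_of_commonPrefix_eq rfl hir hjr with h | h | h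
    · exact exists_three_mul_treeDist_le_of_commonPrefix_eq hij hri.symm hrj.symm
        (hjr.trans h.symm)
    · exact exists_three_mul_treeDist_le_of_commonPrefix_eq hij.symm hrj.symm hri.symm
        (hir.trans h.symm)
    · exact exists_three_mul_treeDist_le_of_commonPrefix_eq hri hrj hij h.symm
  · rcases three_mul_treeDist_le_or_of_not_prefix hθ (hn i) (hn j) hcr hrc with h | h
    exacts [⟨i, j, i, r, hij, hri.symm, h⟩, ⟨i, j, j, r, hij, hrj.symm, h⟩]

end FourPoints

/-- for any `n` and `θ ≥ 2`, every bi-Lipschitz embedding of the complete graph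
`K₄` (4 points at pairwise distance 1) into the weighted complete binary tree `WB_{θ,n}`
has distortion at least `3/2`. -/
theorem K4_into_WB_distortion (n θ : ℕ) (hθ : 2 ≤ θ) (f : Fin 4 → WBvertex n)
    (hf : Function.Injective f) (C lam : ℝ) (hlam : 0 < lam)
    (h : ∀ u v : Fin 4, u ≠ v →
      lam ≤ (WBdist θ n (f u) (f v) : ℝ) ∧ (WBdist θ n (f u) (f v) : ℝ) ≤ C * lam) :
    (3 : ℝ) / 2 ≤ C := by
  obtain ⟨i, j, k, l, hij, hkl, hle⟩ := exists_three_mul_treeDist_le (x := fun i => (f i).1)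
    (by simp) hθ (fun _ _ hab => hf (Subtype.ext hab)) (fun i => (f i).2)
  have hle' : 3 * (WBdist θ n (f i) (f j) : ℝ) ≤ 2 * WBdist θ n (f k) (f l) := by
    exact_mod_cast hle
  have hlow := (h i j hij).1
  have hupp := (h k l hkl).2
  nlinarith
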